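/- arXiv:1908.02747 — 4 statements merged into one kernel-verified Lean document; each statement's English description precedes it below -/
import Mathlib

section
/- Suppose y : [0,∞) → ℝ^{Nd} solves ẏ(t) = -(L ⊗ I_d) y(t) + b(t) where L is the Laplacian of a connected undirected graph and ‖b(t)‖ ≤ C(t+1)^{-τ} with C > 0, τ > 0. Then the disagreement y^⊥(t) := y(t) − (𝟙_N ⊗ I_d) y_avg(t), with y_avg(t) = (1/N) Σ_n y_n(t), converges to 0 as t → ∞. -/
/-!
Each coordinate column of the disagreement `z = y − 𝟙 ⊗ y_avg` sums to zero and, since `L 𝟙 = 0`,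
solves `ż = −L z + (b − 𝟙 ⊗ b_avg)`. On sum-zero vectors the Laplacian form is coercive,
`λ ‖z‖² ≤ zᵀ L z`, by connectivity and compactness of the unit sphere. Young's inequality then
gives `d/dt ‖z‖² ≤ −λ ‖z‖² + ‖b‖² / λ`, and Grönwall's inequality with a forcing term tending to
zero yields `‖z‖² → 0`.
-/

open Matrix Filter Kronecker

open Topology Metric

theorem tendsto_gronwallBound_of_neg {δ K ε : ℝ} (hK : K < 0) :
    Tendsto (gronwallBound δ K ε) atTop (𝓝 (-ε / K)) := by
  have hexp : Tendsto (fun x => Real.exp (K * x)) atTop (𝓝 0) :=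
    Real.tendsto_exp_atBot.comp (tendsto_id.const_mul_atTop_of_neg hK)
  rw [gronwallBound_of_K_ne_0 hK.ne]
  convert (hexp.const_mul δ).add ((hexp.sub_const 1).const_mul (ε / K)) using 2
  ring

theorem tendsto_zero_of_hasDerivAt_le_neg_mul_add {g g' f : ℝ → ℝ} {μ : ℝ} (hμ : 0 < μ)
    (hg : ∀ᶠ t in atTop, HasDerivAt g (g' t) t)
    (hle : ∀ᶠ t in atTop, g' t ≤ -μ * g t + f t)
    (hf : Tendsto f atTop (𝓝 0)) (hg0 : ∀ᶠ t in atTop, 0 ≤ g t) :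
    Tendsto g atTop (𝓝 0) := by
  refine tendsto_order.2 ⟨fun a ha => hg0.mono fun t ht => ha.trans_le ht, fun a ha => ?_⟩
  obtain ⟨T, hT⟩ := eventually_atTop.1
    (hg.and (hle.and (hf.eventually_le_const (show 0 < μ * a / 2 by positivity))))
  have hgronwall : ∀ t ≥ T, g t ≤ gronwallBound (g T) (-μ) (μ * a / 2) (t - T) := by
    intro t ht
    refine le_gronwallBound_of_liminf_deriv_right_le (f' := g') ?_ ?_ le_rfl ?_ t ⟨ht, le_rfl⟩
    · exact fun s hs => (hT s hs.1).1.continuousAt.continuousWithinAt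
    · intro s hs r hr
      simpa [slope_def_field, div_eq_inv_mul] using
        (hT s hs.1).1.hasDerivWithinAt.liminf_right_slope_le hr
    · intro s hs
      linarith [(hT s hs.1).2.1, (hT s hs.1).2.2]
  have hlim : Tendsto (fun t => gronwallBound (g T) (-μ) (μ * a / 2) (t - T)) atTop
      (𝓝 (a / 2)) := by
    have hshift : Tendsto (fun t : ℝ => t - T) atTop atTop :=
      tendsto_atTop_add_const_right _ _ tendsto_id
    have hval : -(μ * a / 2) / -μ = a / 2 := by field_simp
    simpa only [hval, Function.comp_def] using
      (tendsto_gronwallBound_of_neg (δ := g T) (ε := μ * a / 2) (neg_lt_zero.2 hμ)).comp hshift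
  filter_upwards [eventually_ge_atTop T, hlim.eventually_lt_const (half_lt_self ha)]
    with t ht hlt
  exact (hgronwall t ht).trans_lt hlt

section Disagreement

variable {ι : Type*} [Fintype ι]

noncomputable def disagreement (x : ι → ℝ) : ι → ℝ :=
  fun i => x i - (1 / (Fintype.card ι : ℝ)) * ∑ j, x j

theorem sum_disagreement (x : ι → ℝ) : ∑ i, disagreement x i = 0 := by
  rcases isEmpty_or_nonempty ι with hι | hι
  · simp
  · simp [disagreement, Finset.sum_sub_distrib]

theorem dotProduct_disagreement_right {z : ι → ℝ} (hz : ∑ i, z i = 0) (x : ι → ℝ) :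
    z ⬝ᵥ disagreement x = z ⬝ᵥ x := by
  simp [disagreement, dotProduct, mul_sub, ← Finset.sum_mul, hz]

theorem mulVec_disagreement {A : Matrix ι ι ℝ} (hA : A *ᵥ (fun _ => 1) = 0) (x : ι → ℝ) :
    A *ᵥ disagreement x = A *ᵥ x := by
  have : disagreement x = x - ((1 / (Fintype.card ι : ℝ)) * ∑ j, x j) • fun _ => 1 := by
    ext i; simp [disagreement]
  rw [this, mulVec_sub, mulVec_smul, hA, smul_zero, sub_zero]

theorem HasDerivAt.disagreement {x : ℝ → ι → ℝ} {x' : ι → ℝ} {t : ℝ}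
    (hx : HasDerivAt x x' t) :
    HasDerivAt (fun s => disagreement (x s)) (disagreement x') t := by
  rw [hasDerivAt_pi] at hx ⊢
  exact fun i => (hx i).sub ((HasDerivAt.fun_sum fun j _ => hx j).const_mul _)

theorem HasDerivAt.dotProduct_self {x : ℝ → ι → ℝ} {x' : ι → ℝ} {t : ℝ}
    (hx : HasDerivAt x x' t) :
    HasDerivAt (fun s => x s ⬝ᵥ x s) (2 * (x t ⬝ᵥ x')) t := by
  rw [hasDerivAt_pi] at hx
  refine (HasDerivAt.fun_sum (u := Finset.univ) fun i _ => (hx i).mul (hx i)).congr_deriv ?_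
  simp only [dotProduct, Finset.mul_sum]
  exact Finset.sum_congr rfl fun i _ => by ring

theorem two_mul_dotProduct_le {μ : ℝ} (hμ : 0 < μ) (x y : ι → ℝ) :
    2 * (x ⬝ᵥ y) ≤ μ * (x ⬝ᵥ x) + (y ⬝ᵥ y) / μ := by
  have h := dotProduct_self_star_nonneg (μ • x - y)
  simp only [star_trivial, sub_dotProduct, dotProduct_sub, smul_dotProduct, dotProduct_smul,
    smul_eq_mul, dotProduct_comm y x] at h
  rw [div_eq_mul_inv]
  field_simp
  nlinarith

theorem Filter.Tendsto.of_dotProduct_self {α : Type*} {l : Filter α} {x : α → ι → ℝ}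
    (hx : Tendsto (fun a => x a ⬝ᵥ x a) l (𝓝 0)) : Tendsto x l (𝓝 0) := by
  refine tendsto_pi_nhds.2 fun i => squeeze_zero_norm (fun a => ?_) (by simpa using hx.sqrt)
  rw [Real.norm_eq_abs, ← Real.sqrt_sq_eq_abs, sq]
  exact Real.sqrt_le_sqrt (Finset.single_le_sum (f := fun j => x a j * x a j)
    (fun j _ => mul_self_nonneg _) (Finset.mem_univ i))

theorem tendsto_disagreement_of_hasDerivAt {A : Matrix ι ι ℝ} {μ : ℝ} (hμ : 0 < μ)
    (hA : A *ᵥ (fun _ => 1) = 0)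
    (hgap : ∀ z : ι → ℝ, ∑ i, z i = 0 → μ * (z ⬝ᵥ z) ≤ z ⬝ᵥ (A *ᵥ z))
    {x c : ℝ → ι → ℝ} (hx : ∀ᶠ t in atTop, HasDerivAt x (-(A *ᵥ x t) + c t) t)
    (hc : Tendsto c atTop (𝓝 0)) :
    Tendsto (fun t => disagreement (x t)) atTop (𝓝 0) := by
  set z := fun t => disagreement (x t)
  have hz : ∀ t, ∑ i, z t i = 0 := fun t => sum_disagreement (x t)
  -- Pairing with the sum-zero vector `z t` removes the projection, and `A (x t) = A (z t)`.
  have hderiv : ∀ t, z t ⬝ᵥ disagreement (-(A *ᵥ x t) + c t) =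
      -(z t ⬝ᵥ (A *ᵥ z t)) + z t ⬝ᵥ c t := by
    intro t
    rw [dotProduct_disagreement_right (hz t), mulVec_disagreement hA, dotProduct_add,
      dotProduct_neg]
  refine Tendsto.of_dotProduct_self (tendsto_zero_of_hasDerivAt_le_neg_mul_add hμ
    (hx.mono fun t ht => ht.disagreement.dotProduct_self) (f := fun t => (c t ⬝ᵥ c t) / μ)
    (Eventually.of_forall fun t => ?_) ?_ (Eventually.of_forall fun t => ?_))
  · rw [hderiv]
    linarith [hgap (z t) (hz t), two_mul_dotProduct_le hμ (z t) (c t)]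
  · simpa using ((continuous_id.dotProduct continuous_id).tendsto 0).comp hc |>.div_const μ
  · simpa using dotProduct_self_star_nonneg (z t)

end Disagreement

theorem exists_pos_mul_norm_sq_le {E : Type*} [NormedAddCommGroup E] [NormedSpace ℝ E]
    [FiniteDimensional ℝ E] {Q : E → ℝ} (hQ : Continuous Q)
    (hsmul : ∀ (c : ℝ) x, Q (c • x) = c ^ 2 * Q x) (hpos : ∀ x, x ≠ 0 → 0 < Q x) :
    ∃ μ, 0 < μ ∧ ∀ x, μ * ‖x‖ ^ 2 ≤ Q x := by
  rcases subsingleton_or_nontrivial E with _ | _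
  · refine ⟨1, one_pos, fun x => ?_⟩
    simpa [Subsingleton.elim x 0] using (hsmul 0 0).ge
  obtain ⟨u, hu, hmin⟩ := (isCompact_sphere (0 : E) 1).exists_isMinOn
    (NormedSpace.sphere_nonempty.2 zero_le_one) hQ.continuousOn
  have hu0 : u ≠ 0 := ne_zero_of_mem_unit_sphere ⟨u, hu⟩
  refine ⟨Q u, hpos u hu0, fun x => ?_⟩
  rcases eq_or_ne x 0 with rfl | hx
  · simpa using (hsmul 0 0).ge
  have hxpos : 0 < ‖x‖ := norm_pos_iff.2 hx
  have hunit : ‖x‖⁻¹ • x ∈ sphere (0 : E) 1 := by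
    simp [norm_smul, hxpos.ne']
  calc Q u * ‖x‖ ^ 2 ≤ Q (‖x‖⁻¹ • x) * ‖x‖ ^ 2 := by gcongr; exact hmin hunit
    _ = Q x := by rw [hsmul, inv_pow]; field_simp

theorem dotProduct_self_le_card_mul_norm_sq {ι : Type*} [Fintype ι] (x : ι → ℝ) :
    x ⬝ᵥ x ≤ Fintype.card ι * ‖x‖ ^ 2 := by
  calc x ⬝ᵥ x = ∑ i, ‖x i‖ ^ 2 := by simp [dotProduct, sq]
    _ ≤ ∑ _i : ι, ‖x‖ ^ 2 := by gcongr with i; exact norm_le_pi_norm x i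
    _ = Fintype.card ι * ‖x‖ ^ 2 := by simp

namespace SimpleGraph

variable {V : Type*} [Fintype V] [DecidableEq V] {G : SimpleGraph V} [DecidableRel G.Adj]

theorem Connected.dotProduct_lapMatrix_mulVec_add_sq_sum_pos (hG : G.Connected) {x : V → ℝ}
    (hx : x ≠ 0) : 0 < x ⬝ᵥ (G.lapMatrix ℝ *ᵥ x) + (∑ i, x i) ^ 2 := by
  have hL : 0 ≤ x ⬝ᵥ (G.lapMatrix ℝ *ᵥ x) := by
    simpa using (G.posSemidef_lapMatrix ℝ).dotProduct_mulVec_nonneg x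
  refine (add_nonneg hL (sq_nonneg _)).lt_of_ne fun h => hx ?_
  have hLx : G.lapMatrix ℝ *ᵥ x = 0 := by
    rw [← (G.posSemidef_lapMatrix ℝ).dotProduct_mulVec_zero_iff x, star_trivial]
    linarith [sq_nonneg (∑ i, x i)]
  have hsum : ∑ i, x i = 0 := by nlinarith [sq_nonneg (∑ i, x i)]
  have hconst : ∀ i j, x i = x j := fun i j =>
    (lapMatrix_mulVec_eq_zero_iff_forall_reachable G).1 hLx i j (hG.preconnected i j)
  have : Nonempty V := hG.nonempty
  ext i
  have : (Fintype.card V : ℝ) * x i = 0 := by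
    simpa [← hconst i, Finset.sum_const, Finset.card_univ] using hsum
  simpa [Fintype.card_ne_zero] using this

theorem Connected.exists_pos_mul_dotProduct_self_le_lapMatrix (hG : G.Connected) :
    ∃ μ, 0 < μ ∧
      ∀ x : V → ℝ, ∑ i, x i = 0 → μ * (x ⬝ᵥ x) ≤ x ⬝ᵥ (G.lapMatrix ℝ *ᵥ x) := by
  -- `xᵀ L x + (∑ x)²` is positive definite and agrees with the Laplacian form on sum-zero vectors.
  obtain ⟨μ, hμ, hQ⟩ := exists_pos_mul_norm_sq_le
    (Q := fun x : V → ℝ => x ⬝ᵥ (G.lapMatrix ℝ *ᵥ x) + (∑ i, x i) ^ 2)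
    (by fun_prop) (fun c x => by simp [mulVec_smul, ← Finset.mul_sum]; ring)
    fun x hx => hG.dotProduct_lapMatrix_mulVec_add_sq_sum_pos hx
  have hcard : (0 : ℝ) < Fintype.card V := by
    have := hG.nonempty; exact_mod_cast Fintype.card_pos
  refine ⟨μ / Fintype.card V, by positivity, fun x hx => ?_⟩
  calc μ / Fintype.card V * (x ⬝ᵥ x) ≤ μ / Fintype.card V * (Fintype.card V * ‖x‖ ^ 2) := by
        gcongr; exact dotProduct_self_le_card_mul_norm_sq x
    _ = μ * ‖x‖ ^ 2 := by field_simp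
    _ ≤ x ⬝ᵥ (G.lapMatrix ℝ *ᵥ x) := by simpa [hx] using hQ x

end SimpleGraph

theorem kronecker_one_mulVec_apply {R m n : Type*} [Semiring R] [Fintype m] [Fintype n]
    [DecidableEq n] (A : Matrix m m R) (v : m × n → R) (i : m) (j : n) :
    ((A ⊗ₖ (1 : Matrix n n R)) *ᵥ v) (i, j) = (A *ᵥ fun k => v (k, j)) i := by
  simp [mulVec, dotProduct, Fintype.sum_prod_type, one_apply]

theorem disagreement_tendsto_zero_general (N d : ℕ) (G : SimpleGraph (Fin N))
    [DecidableRel G.Adj] (hG : G.Connected)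
    (b : ℝ → (Fin N × Fin d → ℝ))
    (C tau : ℝ) (htau : 0 < tau)
    (hb : ∀ t : ℝ, 0 ≤ t → ‖b t‖ ≤ C * (t + 1) ^ (-tau))
    (y : ℝ → (Fin N × Fin d → ℝ))
    (hy : ∀ t : ℝ, 0 ≤ t → HasDerivAt y
      (-((G.lapMatrix ℝ ⊗ₖ (1 : Matrix (Fin d) (Fin d) ℝ)) *ᵥ y t) + b t) t) :
    Tendsto (fun t => (fun p : Fin N × Fin d =>
        y t p - (1 / (N : ℝ)) * ∑ m : Fin N, y t (m, p.2))) atTop (nhds 0) := by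
  obtain ⟨μ, hμ, hgap⟩ := hG.exists_pos_mul_dotProduct_self_le_lapMatrix
  have hbound : Tendsto (fun t : ℝ => C * (t + 1) ^ (-tau)) atTop (𝓝 0) := by
    simpa using ((tendsto_rpow_neg_atTop htau).comp
      (tendsto_atTop_add_const_right _ 1 tendsto_id)).const_mul C
  have hb0 : Tendsto b atTop (𝓝 0) :=
    squeeze_zero_norm' ((eventually_ge_atTop 0).mono hb) hbound
  refine tendsto_pi_nhds.2 fun ⟨n, j⟩ => ?_
  have hcolumn := tendsto_disagreement_of_hasDerivAt hμ G.lapMatrix_mulVec_const_eq_zero hgap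
    (x := fun t k => y t (k, j)) (c := fun t k => b t (k, j))
    ((eventually_ge_atTop 0).mono fun t ht => hasDerivAt_pi.2 fun k => by
      simpa [kronecker_one_mulVec_apply] using hasDerivAt_pi.1 (hy t ht) (k, j))
    (tendsto_pi_nhds.2 fun k => tendsto_pi_nhds.1 hb0 (k, j))
  simpa [disagreement] using tendsto_pi_nhds.1 hcolumn n

/-- For ẏ = -(L ⊗ I_d) y + b with ‖b(t)‖ ≤ C(t+1)^{-τ}, the disagreement
y⊥(t) = y(t) − 𝟙 ⊗ y_avg(t) tends to zero. -/
theorem disagreement_tendsto_zero (N d : ℕ) (hN : 0 < N) (G : SimpleGraph (Fin N))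
    [DecidableRel G.Adj] (hG : G.Connected)
    (b : ℝ → (Fin N × Fin d → ℝ)) (hbcont : Continuous b)
    (C tau : ℝ) (hC : 0 < C) (htau : 0 < tau)
    (hb : ∀ t : ℝ, 0 ≤ t → ‖b t‖ ≤ C * (t + 1) ^ (-tau))
    (y : ℝ → (Fin N × Fin d → ℝ))
    (hy : ∀ t : ℝ, 0 ≤ t → HasDerivAt y
      (-((G.lapMatrix ℝ ⊗ₖ (1 : Matrix (Fin d) (Fin d) ℝ)) *ᵥ y t) + b t) t) :
    Tendsto (fun t => (fun p : Fin N × Fin d =>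
        y t p - (1 / (N : ℝ)) * ∑ m : Fin N, y t (m, p.2))) atTop (nhds 0) :=
  disagreement_tendsto_zero_general N d G hG b C tau htau hb y hy
end

section
/- Let f : ℝ^d → ℝ be C¹, coercive (f(x) → ∞ as ‖x‖ → ∞), and with locally Lipschitz gradient. Then any solution of the perturbed gradient flow ẏ(t) = −∇f(y(t)) + r(t), where r is continuous with r(t) → 0, that remains bounded has its ω-limit set contained in the critical set { x : ∇f(x) = 0 }, provided f maps its critical set to a set with empty interior. -/
/-!
Along the flow, `d/dt f (y t) = -‖∇f (y t)‖² + ⟪∇f (y t), r t⟫`. Let `p` be an ω-limit point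
with `∇f p ≠ 0`. Near `p` the gradient is bounded below while `r` is eventually small, so every late
visit of `y` near `p` is followed by a drop of `f ∘ y` by a fixed `δ`, and the next visit brings
`f ∘ y` back close to `f p`. Hence each level `v` in an interval just below `f p` is crossed upwards
arbitrarily late; at the last time `f (y s) = v` before the return the derivative is nonnegative,
which forces `‖∇f (y s)‖ ≤ ‖r s‖ → 0`. By compactness of the trajectory every such `v` is a
critical value, so the image of the critical set has nonempty interior.
-/

open Filter Set Topology Metric
open scoped InnerProductSpace

theorem exists_mem_Ico_eq_and_nonneg_of_lt_of_lt {g g' : ℝ → ℝ} {a b v : ℝ} (hab : a ≤ b)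
    (hg : ∀ t ∈ Icc a b, HasDerivAt g (g' t) t) (ha : g a < v) (hb : v < g b) :
    ∃ s ∈ Ico a b, g s = v ∧ 0 ≤ g' s := by
  have hgc : ContinuousOn g (Icc a b) := fun t ht => (hg t ht).continuousAt.continuousWithinAt
  have hA : IsCompact (Icc a b ∩ g ⁻¹' Iic v) :=
    isCompact_Icc.of_isClosed_subset
      (hgc.preimage_isClosed_of_isClosed isClosed_Icc isClosed_Iic) inter_subset_left
  obtain ⟨s, ⟨hsI, hsv⟩, hmax⟩ := hA.exists_isGreatest ⟨a, left_mem_Icc.2 hab, ha.le⟩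
  have hsb : s < b := hsI.2.lt_of_ne (by rintro rfl; exact hsv.not_gt hb)
  have hgt : ∀ᶠ t in 𝓝[>] s, v < g t := by
    filter_upwards [Ioc_mem_nhdsGT hsb] with t ht
    exact lt_of_not_ge fun htv => ht.1.not_ge (hmax ⟨⟨hsI.1.trans ht.1.le, ht.2⟩, htv⟩)
  have hgs : Tendsto g (𝓝[>] s) (𝓝 (g s)) := (hg s hsI).continuousAt.continuousWithinAt
  have hsv' : g s = v := le_antisymm hsv (ge_of_tendsto hgs (hgt.mono fun _ => le_of_lt))
  refine ⟨s, ⟨hsI.1, hsb⟩, hsv', ?_⟩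
  have hslope := (hasDerivWithinAt_iff_tendsto_slope' (s := Ioi s) (lt_irrefl s)).1
    (hg s hsI).hasDerivWithinAt
  refine ge_of_tendsto hslope ?_
  filter_upwards [hgt, self_mem_nhdsWithin] with t hvt hst
  rw [slope_def_field, hsv']
  exact div_nonneg (sub_nonneg.2 hvt.le) (sub_nonneg.2 (le_of_lt hst))

theorem le_sub_mul_of_forall_hasDerivAt_le {g g' : ℝ → ℝ} {a b c : ℝ} (hab : a < b)
    (hg : ∀ t ∈ Icc a b, HasDerivAt g (g' t) t) (hc : ∀ t ∈ Icc a b, g' t ≤ -c) :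
    g b ≤ g a - c * (b - a) := by
  obtain ⟨t, ht, hslope⟩ := exists_hasDerivAt_eq_slope g g' hab
    (fun t ht => (hg t ht).continuousAt.continuousWithinAt)
    (fun t ht => hg t (Ioo_subset_Icc_self ht))
  have := hc t (Ioo_subset_Icc_self ht)
  rw [hslope, div_le_iff₀ (sub_pos.2 hab)] at this
  linarith

theorem IsCompact.exists_eq_zero_of_forall_exists_norm_le {X F : Type*} [TopologicalSpace X]
    [NormedAddCommGroup F] {K : Set X} (hK : IsCompact K) {g : X → F} (hg : ContinuousOn g K)
    (h : ∀ ε > 0, ∃ x ∈ K, ‖g x‖ ≤ ε) : ∃ x ∈ K, g x = 0 := by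
  obtain ⟨x₀, hx₀, -⟩ := h 1 one_pos
  obtain ⟨x, hxK, hmin⟩ := hK.exists_isMinOn ⟨x₀, hx₀⟩ hg.norm
  refine ⟨x, hxK, norm_le_zero_iff.1 (le_of_forall_gt_imp_ge_of_dense fun ε hε => ?_)⟩
  obtain ⟨x', hx'K, hx'⟩ := h ε hε
  exact (hmin hx'K).trans hx'

section InnerProductSpace

variable {E : Type*} [NormedAddCommGroup E] [InnerProductSpace ℝ E]

theorem neg_norm_sq_add_inner_le (u v : E) : -‖u‖ ^ 2 + ⟪u, v⟫_ℝ ≤ -‖u‖ * (‖u‖ - ‖v‖) := by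
  nlinarith [real_inner_le_norm u v]

theorem norm_le_of_nonneg_neg_norm_sq_add_inner {u v : E} (h : 0 ≤ -‖u‖ ^ 2 + ⟪u, v⟫_ℝ) :
    ‖u‖ ≤ ‖v‖ := by
  by_contra! hvu
  nlinarith [neg_norm_sq_add_inner_le u v,
    mul_pos ((norm_nonneg v).trans_lt hvu) (sub_pos.2 hvu)]

variable [CompleteSpace E] {f : E → ℝ}

theorem ContDiff.continuous_gradient (hf : ContDiff ℝ 1 f) : Continuous (gradient f) :=
  (InnerProductSpace.toDual ℝ E).symm.continuous.comp (hf.continuous_fderiv one_ne_zero)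

theorem HasDerivAt.comp_perturbedGradientFlow {r y : ℝ → E} {t : ℝ}
    (hf : DifferentiableAt ℝ f (y t)) (hy : HasDerivAt y (-gradient f (y t) + r t) t) :
    HasDerivAt (fun t => f (y t))
      (-‖gradient f (y t)‖ ^ 2 + ⟪gradient f (y t), r t⟫_ℝ) t := by
  have := hf.hasGradientAt.hasFDerivAt.comp_hasDerivAt t hy
  rwa [InnerProductSpace.toDual_apply_apply, inner_add_right, inner_neg_right,
    real_inner_self_eq_norm_sq] at this

variable {r y : ℝ → E}

theorem exists_pos_eventually_norm_neg_gradient_add_le (hG : Continuous (gradient f))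
    (hr : Tendsto r atTop (𝓝 0)) {K : Set E} (hK : IsCompact K)
    (hyK : ∀ᶠ t in atTop, y t ∈ K) :
    ∃ S > 0, ∀ᶠ t in atTop, ‖-gradient f (y t) + r t‖ ≤ S := by
  obtain ⟨M, hM⟩ := hK.exists_bound_of_continuousOn hG.continuousOn
  have hr1 : ∀ᶠ t in atTop, ‖r t‖ < 1 := NormedAddGroup.tendsto_nhds_zero.1 hr 1 one_pos
  refine ⟨|M| + 1, by positivity, ?_⟩
  filter_upwards [hyK, hr1] with t hyt hrt
  calc ‖-gradient f (y t) + r t‖ ≤ ‖gradient f (y t)‖ + ‖r t‖ := by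
        simpa only [norm_neg] using norm_add_le (-gradient f (y t)) (r t)
    _ ≤ |M| + 1 := by linarith [hM _ hyt, le_abs_self M, hrt]

theorem exists_uniform_decrease_near_of_gradient_ne_zero (hf : ContDiff ℝ 1 f)
    (hr : Tendsto r atTop (𝓝 0))
    (hy : ∀ᶠ t in atTop, HasDerivAt y (-gradient f (y t) + r t) t)
    {K : Set E} (hK : IsCompact K) (hyK : ∀ᶠ t in atTop, y t ∈ K) {p : E}
    (hp : gradient f p ≠ 0) :
    ∃ δ > 0, ∃ η > 0, ∀ᶠ t₀ in atTop,
      dist (y t₀) p < η → ∃ t ≥ t₀, f (y t) ≤ f (y t₀) - δ := by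
  set m := ‖gradient f p‖
  have hm : 0 < m := norm_pos_iff.2 hp
  have hG := hf.continuous_gradient
  obtain ⟨ρ, hρ, hgrad⟩ : ∃ ρ > 0, ∀ x, dist x p < ρ → m / 2 < ‖gradient f x‖ :=
    Metric.eventually_nhds_iff.1 ((hG.norm.tendsto p).eventually (lt_mem_nhds (half_lt_self hm)))
  obtain ⟨S, hS, hspeed⟩ := exists_pos_eventually_norm_neg_gradient_add_le hG hr hK hyK
  have hr' : ∀ᶠ t in atTop, ‖r t‖ < m / 4 :=
    NormedAddGroup.tendsto_nhds_zero.1 hr _ (by positivity)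
  obtain ⟨T, hT⟩ := eventually_atTop.1 (hy.and (hspeed.and hr'))
  set τ := ρ / (2 * S)
  have hτ : 0 < τ := by positivity
  refine ⟨m ^ 2 / 8 * τ, by positivity, ρ / 2, by positivity,
    eventually_atTop.2 ⟨T, fun t₀ ht₀ hnear => ⟨t₀ + τ, by linarith, ?_⟩⟩⟩
  have hI : ∀ t ∈ Icc t₀ (t₀ + τ), T ≤ t := fun t ht => ht₀.trans ht.1
  have hstay : ∀ t ∈ Icc t₀ (t₀ + τ), dist (y t) p < ρ := by
    intro t ht
    have hmove := norm_image_sub_le_of_norm_deriv_le_segment'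
      (fun t ht => (hT t (hI t ht)).1.hasDerivWithinAt)
      (fun t ht => (hT t (hI t (Ico_subset_Icc_self ht))).2.1) t ht
    have hdisp : S * (t - t₀) ≤ ρ / 2 := by
      calc S * (t - t₀) ≤ S * τ := by gcongr; linarith [ht.2]
        _ = ρ / 2 := by simp only [τ]; field_simp
    calc dist (y t) p ≤ dist (y t) (y t₀) + dist (y t₀) p := dist_triangle _ _ _
      _ < ρ := by rw [dist_eq_norm]; linarith
  -- Within `ρ` of `p` the rate of change of `f ∘ y` is at most `-(m / 2) * (m / 2 - m / 4)`.
  refine le_sub_mul_of_forall_hasDerivAt_le (c := m ^ 2 / 8) (by linarith)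
    (fun t ht => (hT t (hI t ht)).1.comp_perturbedGradientFlow
      (hf.differentiable one_ne_zero _))
    (fun t ht => ?_) |>.trans_eq (by ring)
  have hgrad_t := hgrad _ (hstay t ht)
  have hr_t := (hT t (hI t ht)).2.2
  nlinarith [neg_norm_sq_add_inner_le (gradient f (y t)) (r t)]

theorem mem_image_setOf_gradient_eq_zero (hf : ContDiff ℝ 1 f) {K : Set E} (hK : IsCompact K)
    {v : ℝ} (h : ∀ ε > 0, ∃ x ∈ K, f x = v ∧ ‖gradient f x‖ ≤ ε) :
    v ∈ f '' {x | gradient f x = 0} := by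
  have hKv : IsCompact (K ∩ f ⁻¹' {v}) :=
    hK.inter_right (isClosed_singleton.preimage hf.continuous)
  obtain ⟨x, ⟨-, hxv⟩, hx⟩ := hKv.exists_eq_zero_of_forall_exists_norm_le
    hf.continuous_gradient.continuousOn fun ε hε => by
      obtain ⟨x, hxK, hxv, hx⟩ := h ε hε
      exact ⟨x, ⟨hxK, hxv⟩, hx⟩
  exact ⟨x, hx, hxv⟩

theorem exists_lt_forall_mem_Ioo_frequently_eq_and_norm_gradient_le (hf : ContDiff ℝ 1 f)
    (hr : Tendsto r atTop (𝓝 0))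
    (hy : ∀ᶠ t in atTop, HasDerivAt y (-gradient f (y t) + r t) t)
    {K : Set E} (hK : IsCompact K) (hyK : ∀ᶠ t in atTop, y t ∈ K) {p : E}
    (hp : MapClusterPt p atTop y) (hp₀ : gradient f p ≠ 0) :
    ∃ a b, a < b ∧ ∀ v ∈ Ioo a b,
      ∃ᶠ s in atTop, f (y s) = v ∧ ‖gradient f (y s)‖ ≤ ‖r s‖ := by
  obtain ⟨δ, hδ, η, hη, hdrop⟩ :=
    exists_uniform_decrease_near_of_gradient_ne_zero hf hr hy hK hyK hp₀
  have hvisit : ∃ᶠ t in atTop,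
      dist (y t) p < η ∧ f (y t) ∈ Ioo (f p - δ / 4) (f p + δ / 4) :=
    hp.frequently ((show ∀ᶠ x in 𝓝 p, dist x p < η from ball_mem_nhds p hη).and
      ((hf.continuous.tendsto p).eventually (Ioo_mem_nhds (by linarith) (by linarith))))
  refine ⟨f p - 3 * δ / 4, f p - δ / 4, by linarith,
    fun v hv => frequently_atTop.2 fun T₀ => ?_⟩
  obtain ⟨T, hT⟩ := eventually_atTop.1 (hdrop.and hy)
  -- Between the drop that follows a visit near `p` and the next visit, `f ∘ y` crosses `v` upwards.
  obtain ⟨a, ha, hya, hfa⟩ := frequently_atTop.1 hvisit (max T₀ T)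
  obtain ⟨t, hta, hft⟩ := (hT a (le_of_max_le_right ha)).1 hya
  obtain ⟨b, htb, -, hfb⟩ := frequently_atTop.1 hvisit t
  obtain ⟨s, hs, hsv, hs₀⟩ := exists_mem_Ico_eq_and_nonneg_of_lt_of_lt (v := v) htb
    (fun s hs => (hT s (by linarith [le_of_max_le_right ha, hs.1])).2.comp_perturbedGradientFlow
      (hf.differentiable one_ne_zero _))
    (by linarith [hfa.1, hfa.2, hv.1]) (by linarith [hfb.1, hv.2])
  exact ⟨s, by linarith [le_of_max_le_left ha, hs.1], hsv,
    norm_le_of_nonneg_neg_norm_sq_add_inner hs₀⟩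

theorem interior_image_setOf_gradient_eq_zero_nonempty (hf : ContDiff ℝ 1 f)
    (hr : Tendsto r atTop (𝓝 0))
    (hy : ∀ᶠ t in atTop, HasDerivAt y (-gradient f (y t) + r t) t)
    {K : Set E} (hK : IsCompact K) (hyK : ∀ᶠ t in atTop, y t ∈ K) {p : E}
    (hp : MapClusterPt p atTop y) (hp₀ : gradient f p ≠ 0) :
    (interior (f '' {x | gradient f x = 0})).Nonempty := by
  obtain ⟨a, b, hab, hcross⟩ :=
    exists_lt_forall_mem_Ioo_frequently_eq_and_norm_gradient_le hf hr hy hK hyK hp hp₀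
  refine (nonempty_Ioo.2 hab).mono (interior_maximal (fun v hv => ?_) isOpen_Ioo)
  refine mem_image_setOf_gradient_eq_zero hf hK fun ε hε => ?_
  have hrε : ∀ᶠ t in atTop, ‖r t‖ < ε := NormedAddGroup.tendsto_nhds_zero.1 hr ε hε
  obtain ⟨s, ⟨hsv, hs⟩, hrs, hys⟩ := ((hcross v hv).and_eventually (hrε.and hyK)).exists
  exact ⟨y s, hys, hsv, hs.trans hrs.le⟩

end InnerProductSpace

theorem omega_limit_subset_critical_general (d : ℕ)
    (f : EuclideanSpace ℝ (Fin d) → ℝ) (hf : ContDiff ℝ 1 f)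
    (hsard : interior (f '' {x | gradient f x = 0}) = ∅)
    (r : ℝ → EuclideanSpace ℝ (Fin d))
    (hr : Tendsto r atTop (nhds 0))
    (y : ℝ → EuclideanSpace ℝ (Fin d))
    (hy : ∀ t : ℝ, 0 ≤ t → HasDerivAt y (-gradient f (y t) + r t) t)
    (hbdd : ∃ C : ℝ, ∀ t : ℝ, 0 ≤ t → ‖y t‖ ≤ C) :
    (⋂ t : ℝ, closure (y '' Ici t)) ⊆ {x | gradient f x = 0} := by
  intro p hp
  by_contra hp₀
  obtain ⟨C, hC⟩ := hbdd
  have hp' : MapClusterPt p atTop y :=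
    mapClusterPt_atTop_iff_forall_mem_closure.2 (mem_iInter.1 hp)
  have hyK : ∀ᶠ t in atTop, y t ∈ closedBall 0 C :=
    eventually_atTop.2 ⟨0, fun t ht => mem_closedBall_zero_iff.2 (hC t ht)⟩
  simpa [hsard] using interior_image_setOf_gradient_eq_zero_nonempty hf hr
    (eventually_atTop.2 ⟨0, hy⟩) (isCompact_closedBall 0 C) hyK hp' hp₀

/-- ω-limit sets of bounded solutions of the perturbed gradient flow ẏ = −∇f(y) + r(t),
with r(t) → 0, are contained in the critical set of f (provided f maps its critical set
to a set with empty interior). -/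
theorem omega_limit_subset_critical (d : ℕ)
    (f : EuclideanSpace ℝ (Fin d) → ℝ) (hf : ContDiff ℝ 1 f)
    (hcoercive : Tendsto f (Filter.cocompact (EuclideanSpace ℝ (Fin d))) atTop)
    (hlip : LocallyLipschitz (gradient f))
    (hsard : interior (f '' {x | gradient f x = 0}) = ∅)
    (r : ℝ → EuclideanSpace ℝ (Fin d)) (hrcont : Continuous r)
    (hr : Tendsto r atTop (nhds 0))
    (y : ℝ → EuclideanSpace ℝ (Fin d))
    (hy : ∀ t : ℝ, 0 ≤ t → HasDerivAt y (-gradient f (y t) + r t) t)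
    (hbdd : ∃ C : ℝ, ∀ t : ℝ, 0 ≤ t → ‖y t‖ ≤ C) :
    (⋂ t : ℝ, closure (y '' Ici t)) ⊆ {x | gradient f x = 0} :=
  omega_limit_subset_critical_general d f hf hsard r hr y hy hbdd
end

section
/- Let h : ℝ^M → ℝ be C² and Q symmetric positive semidefinite. Suppose x* ∈ N(Q) satisfies: ∇h(x*) is orthogonal to N(Q) (so x* is a critical point of h restricted to N(Q)) and the restricted Hessian of h on N(Q) at x* is nonsingular. Then there exist β₀ > 0 and a C¹ curve g : (β₀, ∞) → ℝ^M such that ∇h(g(β)) + β Q g(β) = 0 for all β > β₀ and g(β) → x* as β → ∞. -/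
open Matrix Filter Topology

/-!
Put t = β⁻¹ and let P be the orthogonal projection onto N(Q). Since Q is symmetric, Qx ⟂ N(Q),
so ∇h(x) + βQx = 0 splits into P∇h(x) = 0 and (I - P)∇h(x) + βQx = 0. Multiplying the latter
by t gives the residual F(t, x) = P∇h(x) + t(I - P)∇h(x) + Qx, which still makes sense at t = 0.
There F(0, x*) = 0, and ∂ₓF(0, x*) = P∇²h(x*) + Q is injective precisely because the restricted
Hessian is nondegenerate. The implicit function theorem gives a C¹ germ ψ with ψ(0) = x* and
F(t, ψ t) = 0, and g(β) = ψ(β⁻¹).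
-/

theorem ContDiff.gradient {F : Type*} [NormedAddCommGroup F] [InnerProductSpace ℝ F]
    [CompleteSpace F] {f : F → ℝ} {n : WithTop ℕ∞} (hf : ContDiff ℝ (n + 1) f) :
    ContDiff ℝ n (gradient f) :=
  (InnerProductSpace.toDual ℝ F).symm.toContinuousLinearEquiv.contDiff.comp
    (hf.fderiv_right le_rfl)

theorem LinearMap.IsSymmetric.apply_mem_orthogonal_ker {𝕜 E : Type*} [RCLike 𝕜]
    [NormedAddCommGroup E] [InnerProductSpace 𝕜 E] {T : E →ₗ[𝕜] E} (hT : T.IsSymmetric)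
    (x : E) : T x ∈ (LinearMap.ker T)ᗮ := by
  rw [← hT.orthogonal_range]
  exact Submodule.le_orthogonal_orthogonal _ (LinearMap.mem_range_self T x)

theorem ContinuousLinearMap.isInvertible_of_injective {𝕜 E : Type*} [NontriviallyNormedField 𝕜]
    [CompleteSpace 𝕜] [NormedAddCommGroup E] [NormedSpace 𝕜 E] [FiniteDimensional 𝕜 E]
    {f : E →L[𝕜] E} (hf : Function.Injective f) : f.IsInvertible :=
  ⟨(LinearEquiv.ofInjectiveEndo (f : E →ₗ[𝕜] E) hf).toContinuousLinearEquiv, rfl⟩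

theorem exists_forall_gt_inv_of_eventually_nhds_zero {p : ℝ → Prop} (hp : ∀ᶠ t in 𝓝 0, p t) :
    ∃ β₀ > 0, ∀ β > β₀, p β⁻¹ := by
  obtain ⟨β₀, hβ₀⟩ := eventually_atTop.1 (tendsto_inv_atTop_zero.eventually hp)
  exact ⟨max β₀ 1, by positivity, fun β hβ => hβ₀ β (le_max_left _ _ |>.trans hβ.le)⟩

section PenaltyResidual

variable {E : Type*} [NormedAddCommGroup E] [InnerProductSpace ℝ E] [FiniteDimensional ℝ E]

open LinearMap

noncomputable def penaltyResidual (T : E →ₗ[ℝ] E) (grad : E → E) (p : ℝ × E) : E :=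
  (ker T).starProjection (grad p.2) + p.1 • (grad p.2 - (ker T).starProjection (grad p.2)) + T p.2


variable {T : E →ₗ[ℝ] E} {grad : E → E}

@[simp]
theorem penaltyResidual_zero_fst (x : E) :
    penaltyResidual T grad (0, x) = (ker T).starProjection (grad x) + T x := by
  simp [penaltyResidual]

theorem add_inv_smul_eq_zero_of_penaltyResidual_eq_zero (hT : T.IsSymmetric) {t : ℝ} {x : E}
    (ht : t ≠ 0) (hx : penaltyResidual T grad (t, x) = 0) : grad x + t⁻¹ • T x = 0 := by
  set P := (ker T).starProjection
  have hperp : t • (grad x - P (grad x)) + T x ∈ (ker T)ᗮ :=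
    add_mem (Submodule.smul_mem _ _ ((ker T).sub_starProjection_mem_orthogonal _))
      (hT.apply_mem_orthogonal_ker x)
  obtain ⟨hP, hperp_eq⟩ := Submodule.disjoint_iff_add_eq_zero.1 (ker T).orthogonal_disjoint
    ((ker T).starProjection_apply_mem _) hperp (by rw [← add_assoc]; exact hx)
  rw [hP, sub_zero] at hperp_eq
  calc grad x + t⁻¹ • T x = t⁻¹ • (t • grad x + T x) := by rw [smul_add, inv_smul_smul₀ ht]
    _ = 0 := by rw [hperp_eq, smul_zero]

theorem contDiff_penaltyResidual {n : WithTop ℕ∞} (hgrad : ContDiff ℝ n grad) :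
    ContDiff ℝ n (penaltyResidual T grad) := by
  have hP : ContDiff ℝ n (ker T).starProjection := (ker T).starProjection.contDiff
  have hT : ContDiff ℝ n T := T.toContinuousLinearMap.contDiff
  unfold penaltyResidual
  fun_prop

theorem fderiv_penaltyResidual_comp_inr {x : E} (hgrad : DifferentiableAt ℝ grad x) :
    fderiv ℝ (penaltyResidual T grad) (0, x) ∘L .inr ℝ ℝ E =
      (ker T).starProjection ∘L fderiv ℝ grad x + T.toContinuousLinearMap := by
  have hF : DifferentiableAt ℝ (penaltyResidual T grad) (0, x) := by
    have hP : Differentiable ℝ (ker T).starProjection := (ker T).starProjection.differentiable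
    have hT : Differentiable ℝ T := T.toContinuousLinearMap.differentiable
    unfold penaltyResidual
    fun_prop
  have hslice : HasFDerivAt (fun y => penaltyResidual T grad (0, y))
      ((ker T).starProjection ∘L fderiv ℝ grad x + T.toContinuousLinearMap) x := by
    simp only [penaltyResidual_zero_fst]
    exact ((ker T).starProjection.hasFDerivAt.comp x hgrad.hasFDerivAt).add
      T.toContinuousLinearMap.hasFDerivAt
  exact (hF.hasFDerivAt.comp x (hasFDerivAt_prodMk_right 0 x)).unique hslice

theorem injective_starProjection_comp_add (hT : T.IsSymmetric) {H : E →L[ℝ] E}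
    (hH : ∀ v ∈ ker T, (ker T).starProjection (H v) = 0 → v = 0) :
    Function.Injective ((ker T).starProjection ∘L H + T.toContinuousLinearMap) := by
  refine (injective_iff_map_eq_zero _).2 fun v hv => ?_
  obtain ⟨hPH, hTv⟩ := Submodule.disjoint_iff_add_eq_zero.1 (ker T).orthogonal_disjoint
    ((ker T).starProjection_apply_mem _) (hT.apply_mem_orthogonal_ker v) hv
  exact hH v hTv hPH

end PenaltyResidual

theorem penalized_critical_curve_general (M : ℕ)
    (h : EuclideanSpace ℝ (Fin M) → ℝ) (hh : ContDiff ℝ 2 h)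
    (Q : Matrix (Fin M) (Fin M) ℝ) (hQsymm : Q.IsSymm)
    (xstar : EuclideanSpace ℝ (Fin M))
    (hker : Matrix.toEuclideanLin Q xstar = 0)
    (horth : ∀ w : EuclideanSpace ℝ (Fin M), Matrix.toEuclideanLin Q w = 0 →
      inner ℝ (gradient h xstar) w = (0 : ℝ))
    (hnondeg : ∀ v : EuclideanSpace ℝ (Fin M), Matrix.toEuclideanLin Q v = 0 →
      (Submodule.orthogonalProjectionOnto (LinearMap.ker (Matrix.toEuclideanLin Q))
        (fderiv ℝ (gradient h) xstar v) : EuclideanSpace ℝ (Fin M)) = 0 → v = 0) :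
    ∃ beta0 : ℝ, 0 < beta0 ∧ ∃ g : ℝ → EuclideanSpace ℝ (Fin M),
      ContDiffOn ℝ 1 g (Set.Ioi beta0) ∧
      (∀ beta > beta0, gradient h (g beta) + beta • Matrix.toEuclideanLin Q (g beta) = 0) ∧
      Tendsto g atTop (nhds xstar) := by
  set T := Matrix.toEuclideanLin Q
  have hT : T.IsSymmetric := isSymmetric_toEuclideanLin_iff.2 (isHermitian_iff_isSymm.2 hQsymm)
  have hgrad : ContDiff ℝ 1 (gradient h) := hh.gradient
  have hF0 : penaltyResidual T (gradient h) (0, xstar) = 0 := by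
    rw [penaltyResidual_zero_fst, hker, add_zero, Submodule.starProjection_apply_eq_zero_iff,
      Submodule.mem_orthogonal']
    exact horth
  have hinv :
      (fderiv ℝ (penaltyResidual T (gradient h)) (0, xstar) ∘L .inr ℝ ℝ _).IsInvertible := by
    rw [fderiv_penaltyResidual_comp_inr (hgrad.differentiable one_ne_zero _)]
    exact ContinuousLinearMap.isInvertible_of_injective
      (injective_starProjection_comp_add hT hnondeg)
  have hFc : ContDiffAt ℝ 1 (penaltyResidual T (gradient h)) (0, xstar) :=
    (contDiff_penaltyResidual hgrad).contDiffAt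
  set ψ := hFc.implicitFunction one_ne_zero hinv
  have hψ : ∀ᶠ t in 𝓝 0, ContDiffAt ℝ 1 ψ t ∧ penaltyResidual T (gradient h) (t, ψ t) = 0 := by
    refine ((hFc.contDiffAt_implicitFunction one_ne_zero hinv).eventually (by simp)).and ?_
    simpa only [hF0] using hFc.eventually_apply_implicitFunction one_ne_zero hinv
  obtain ⟨β₀, hβ₀, hβ⟩ := exists_forall_gt_inv_of_eventually_nhds_zero hψ
  refine ⟨β₀, hβ₀, fun β => ψ β⁻¹, fun β hβ₀β => ?_, fun β hβ₀β => ?_, ?_⟩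
  · have hβ0 : β ≠ 0 := (hβ₀.trans hβ₀β).ne'
    exact ((hβ β hβ₀β).1.comp β (contDiffAt_inv ℝ hβ0)).contDiffWithinAt
  · simpa only [inv_inv] using add_inv_smul_eq_zero_of_penaltyResidual_eq_zero hT
      (inv_ne_zero (hβ₀.trans hβ₀β).ne') (hβ β hβ₀β).2
  · have hψ0 : ψ 0 = xstar := hFc.implicitFunction_apply_self one_ne_zero hinv
    exact hψ0 ▸ (hFc.contDiffAt_implicitFunction one_ne_zero hinv).continuousAt.tendsto.comp
      tendsto_inv_atTop_zero

/-- Implicit-function-theorem step: if x* is a nondegenerate critical point of h restricted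
to N(Q), then for large β there is a C¹ curve g(β) of critical points of h(x) + β xᵀQx with
g(β) → x*. -/
theorem penalized_critical_curve (M : ℕ)
    (h : EuclideanSpace ℝ (Fin M) → ℝ) (hh : ContDiff ℝ 2 h)
    (Q : Matrix (Fin M) (Fin M) ℝ) (hQsymm : Q.IsSymm) (hQpsd : Q.PosSemidef)
    (xstar : EuclideanSpace ℝ (Fin M))
    (hker : Matrix.toEuclideanLin Q xstar = 0)
    (horth : ∀ w : EuclideanSpace ℝ (Fin M), Matrix.toEuclideanLin Q w = 0 →
      inner ℝ (gradient h xstar) w = (0 : ℝ))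
    (hnondeg : ∀ v : EuclideanSpace ℝ (Fin M), Matrix.toEuclideanLin Q v = 0 →
      (Submodule.orthogonalProjectionOnto (LinearMap.ker (Matrix.toEuclideanLin Q))
        (fderiv ℝ (gradient h) xstar v) : EuclideanSpace ℝ (Fin M)) = 0 → v = 0) :
    ∃ beta0 : ℝ, 0 < beta0 ∧ ∃ g : ℝ → EuclideanSpace ℝ (Fin M),
      ContDiffOn ℝ 1 g (Set.Ioi beta0) ∧
      (∀ beta > beta0, gradient h (g beta) + beta • Matrix.toEuclideanLin Q (g beta) = 0) ∧
      Tendsto g atTop (nhds xstar) :=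
  penalized_critical_curve_general M h hh Q hQsymm xstar hker horth hnondeg
end

section
/- Let u : [t₀,∞) → ℝ^M be a continuous solution of the integral equation u(t) = Vˢ(t,t₀)(aˢ,0) + ∫_{t₀}^t Vˢ(t,τ) G(u(τ),τ) dτ − ∫_t^∞ Vᵘ(t,τ) G(u(τ),τ) dτ, where Vˢ(t,τ) = diag(exp ∫_τ^t Λˢ, 0) and Vᵘ(t,τ) = diag(0, exp ∫_τ^t Λᵘ) for block-diagonal continuous Λ(t) = diag(Λˢ(t), Λᵘ(t)), and G(·,t) is continuous and locally Lipschitz with the improper integral converging. Then u is differentiable and satisfies u̇(t) = Λ(t) u(t) + G(u(t), t) for all t ≥ t₀, with uᵢ(t₀) equal to aˢᵢ plus the i-th component of −∫_{t₀}^∞ Vᵘ(t₀,τ) G(u(τ),τ) dτ for i = 1,...,k. -/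
open Matrix MeasureTheory Set

/-- Variation of parameters: a continuous solution of the stable integral equation is
differentiable and solves the ODE u̇ = Λ(t)u + G(u,t), with the prescribed stable
components at t₀. -/
theorem integral_equation_solves_ode (M k : ℕ) (hkM : k ≤ M) (t0 : ℝ)
    (lam : Fin M → ℝ → ℝ) (hlamcont : ∀ i, Continuous (lam i))
    (Vs Vu : ℝ → ℝ → Matrix (Fin M) (Fin M) ℝ)
    (hVs : ∀ t tau, Vs t tau =
      Matrix.diagonal fun i : Fin M => if (i : ℕ) < k then Real.exp (∫ s in tau..t, lam i s) else 0)
    (hVu : ∀ t tau, Vu t tau =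
      Matrix.diagonal fun i : Fin M => if (i : ℕ) < k then 0 else Real.exp (∫ s in tau..t, lam i s))
    (G : (Fin M → ℝ) → ℝ → (Fin M → ℝ))
    (hGcont : Continuous fun p : (Fin M → ℝ) × ℝ => G p.1 p.2)
    (u : ℝ → (Fin M → ℝ)) (hucont : Continuous u)
    (hGb : ∃ B : ℝ, ∀ τ ≥ t0, ‖G (u τ) τ‖ ≤ B)
    (hint : ∀ t ≥ t0, IntegrableOn (fun τ => Vu t τ *ᵥ G (u τ) τ) (Ioi t))
    (aS : Fin k → ℝ) (pad : Fin M → ℝ)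
    (hpad : ∀ i : Fin M, pad i = if h : (i : ℕ) < k then aS ⟨(i : ℕ), h⟩ else 0)
    (heq : ∀ t ≥ t0, u t = Vs t t0 *ᵥ pad
      + (∫ τ in t0..t, Vs t τ *ᵥ G (u τ) τ)
      - ∫ τ in Ioi t, Vu t τ *ᵥ G (u τ) τ) :
    (∀ t ≥ t0, HasDerivWithinAt u
        ((Matrix.diagonal fun i => lam i t) *ᵥ u t + G (u t) t) (Ici t0) t) ∧
      ∀ i : Fin M, ∀ hik : (i : ℕ) < k,
        u t0 i = aS ⟨(i : ℕ), hik⟩ + (-(∫ τ in Ioi t0, Vu t0 τ *ᵥ G (u τ) τ)) i := by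
  classical
  -- component functions
  set g : Fin M → ℝ → ℝ := fun i τ => G (u τ) τ i with hgdef
  have hgc : ∀ i, Continuous (g i) := fun i =>
    (continuous_apply i).comp (hGcont.comp (hucont.prodMk continuous_id))
  set L : Fin M → ℝ → ℝ := fun i t => ∫ s in t0..t, lam i s with hLdef
  have hLder : ∀ i t, HasDerivAt (L i) (lam i t) t := fun i t =>
    intervalIntegral.integral_hasDerivAt_right ((hlamcont i).intervalIntegrable _ _)
      ((hlamcont i).stronglyMeasurableAtFilter _ _) (hlamcont i).continuousAt
  have hLcont : ∀ i, Continuous (L i) :=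
    fun i => continuous_iff_continuousAt.2 fun t => (hLder i t).continuousAt
  set h : Fin M → ℝ → ℝ := fun i τ => Real.exp (-(L i τ)) * g i τ with hhdef
  have hhc : ∀ i, Continuous (h i) := fun i => ((hLcont i).neg.rexp).mul (hgc i)
  -- component values of the matrix-vector products
  have hsub : ∀ (i : Fin M) (t τ : ℝ), (∫ s in τ..t, lam i s) = L i t - L i τ := by
    intro i t τ
    rw [hLdef]
    exact (intervalIntegral.integral_interval_sub_left
      ((hlamcont i).intervalIntegrable _ _) ((hlamcont i).intervalIntegrable _ _)).symm
  have hexp : ∀ (i : Fin M) (t τ : ℝ),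
      Real.exp (L i t - L i τ) * g i τ = Real.exp (L i t) * h i τ := by
    intro i t τ
    simp only [hhdef, Real.exp_sub, Real.exp_neg]
    ring
  have hVuComp : ∀ (t τ : ℝ) (i : Fin M), (Vu t τ *ᵥ G (u τ) τ) i =
      if (i : ℕ) < k then 0 else Real.exp (L i t) * h i τ := by
    intro t τ i
    rw [hVu, Matrix.mulVec_diagonal]
    by_cases hik : (i : ℕ) < k
    · simp [hik]
    · simp only [hik, if_false]
      rw [hsub i t τ, hexp i t τ]
  have hVsComp : ∀ (t τ : ℝ) (i : Fin M), (Vs t τ *ᵥ G (u τ) τ) i =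
      if (i : ℕ) < k then Real.exp (L i t) * h i τ else 0 := by
    intro t τ i
    rw [hVs, Matrix.mulVec_diagonal]
    by_cases hik : (i : ℕ) < k
    · simp only [hik, if_true]
      rw [hsub i t τ, hexp i t τ]
    · simp [hik]
  -- component of the Ioi integral
  have compIoi : ∀ t, t0 ≤ t → ∀ i : Fin M,
      (∫ τ in Ioi t, Vu t τ *ᵥ G (u τ) τ) i = ∫ τ in Ioi t, (Vu t τ *ᵥ G (u τ) τ) i := by
    intro t ht i
    have := (ContinuousLinearMap.proj (R := ℝ) (φ := fun _ : Fin M => ℝ) i).integral_comp_comm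
      (hint t ht)
    simpa using this.symm
  -- integrability of h i on Ioi t for unstable components
  have hhint : ∀ t, t0 ≤ t → ∀ i : Fin M, ¬ (i : ℕ) < k → IntegrableOn (h i) (Ioi t) := by
    intro t ht i hik
    have h1 : IntegrableOn (fun τ => (Vu t τ *ᵥ G (u τ) τ) i) (Ioi t) :=
      (ContinuousLinearMap.proj (R := ℝ) (φ := fun _ : Fin M => ℝ) i).integrable_comp (hint t ht)
    have h2 : IntegrableOn (fun τ => Real.exp (L i t) * h i τ) (Ioi t) := by
      have : (fun τ => (Vu t τ *ᵥ G (u τ) τ) i) = fun τ => Real.exp (L i t) * h i τ := by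
        funext τ; rw [hVuComp t τ i, if_neg hik]
      rwa [this] at h1
    have h3 := h2.const_mul (Real.exp (-(L i t)))
    have : (fun τ => Real.exp (-(L i t)) * (Real.exp (L i t) * h i τ)) = h i := by
      funext τ
      rw [← mul_assoc, ← Real.exp_add]
      simp
    rwa [this] at h3
  -- the constant vector
  set c : Fin M → ℝ := fun i => if (i : ℕ) < k then pad i else -∫ τ in Ioi t0, h i τ with hcdef
  -- key componentwise identity
  have key : ∀ t, t0 ≤ t → ∀ i : Fin M,
      u t i = Real.exp (L i t) * (c i + ∫ τ in t0..t, h i τ) := by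
    intro t ht i
    have hu := congrFun (heq t ht) i
    -- continuity of the interval integrand
    have hVscont : Continuous fun τ => Vs t τ *ᵥ G (u τ) τ := by
      apply continuous_pi
      intro j
      have : (fun τ => (Vs t τ *ᵥ G (u τ) τ) j)
          = fun τ => if (j : ℕ) < k then Real.exp (L j t) * h j τ else 0 := by
        funext τ; exact hVsComp t τ j
      rw [this]
      by_cases hjk : (j : ℕ) < k
      · simp only [hjk, if_true]; exact continuous_const.mul (hhc j)
      · simp only [hjk, if_false]; exact continuous_const
    have hcompS : (∫ τ in t0..t, Vs t τ *ᵥ G (u τ) τ) i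
        = ∫ τ in t0..t, (Vs t τ *ᵥ G (u τ) τ) i := by
      rw [intervalIntegral.integral_of_le ht, intervalIntegral.integral_of_le ht]
      have hi : IntegrableOn (fun τ => Vs t τ *ᵥ G (u τ) τ) (Ioc t0 t) :=
        (hVscont.intervalIntegrable t0 t).1
      have := (ContinuousLinearMap.proj (R := ℝ) (φ := fun _ : Fin M => ℝ) i).integral_comp_comm hi
      simpa using this.symm
    rw [Pi.sub_apply, Pi.add_apply, hcompS, compIoi t ht i] at hu
    have hS : (∫ τ in t0..t, (Vs t τ *ᵥ G (u τ) τ) i)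
        = if (i : ℕ) < k then Real.exp (L i t) * ∫ τ in t0..t, h i τ else 0 := by
      by_cases hik : (i : ℕ) < k
      · simp only [hik, if_true]
        rw [← intervalIntegral.integral_const_mul]
        apply intervalIntegral.integral_congr
        intro τ _
        show (Vs t τ *ᵥ G (u τ) τ) i = Real.exp (L i t) * h i τ
        rw [hVsComp t τ i, if_pos hik]
      · simp only [hik, if_false]
        have : ∀ τ ∈ Set.uIcc t0 t, (Vs t τ *ᵥ G (u τ) τ) i = (0 : ℝ) := by
          intro τ _
          show (Vs t τ *ᵥ G (u τ) τ) i = (0 : ℝ)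
          rw [hVsComp t τ i, if_neg hik]
        rw [intervalIntegral.integral_congr this, intervalIntegral.integral_zero]
    have hU : (∫ τ in Ioi t, (Vu t τ *ᵥ G (u τ) τ) i)
        = if (i : ℕ) < k then 0 else Real.exp (L i t) * ∫ τ in Ioi t, h i τ := by
      by_cases hik : (i : ℕ) < k
      · simp only [hik, if_true]
        have : ∀ τ ∈ Ioi t, (Vu t τ *ᵥ G (u τ) τ) i = (0 : ℝ) := by
          intro τ _
          show (Vu t τ *ᵥ G (u τ) τ) i = (0 : ℝ)
          rw [hVuComp t τ i, if_pos hik]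
        rw [setIntegral_congr_fun measurableSet_Ioi this]
        simp
      · simp only [hik, if_false]
        rw [← integral_const_mul]
        apply setIntegral_congr_fun measurableSet_Ioi
        intro τ _
        show (Vu t τ *ᵥ G (u τ) τ) i = Real.exp (L i t) * h i τ
        rw [hVuComp t τ i, if_neg hik]
    have hpad0 : (Vs t t0 *ᵥ pad) i = (if (i : ℕ) < k then Real.exp (L i t) else 0) * pad i := by
      rw [hVs, Matrix.mulVec_diagonal]
    rw [hS, hU, hpad0] at hu
    by_cases hik : (i : ℕ) < k
    · simp only [hik, if_true] at hu ⊢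
      rw [hu, hcdef]
      simp only [hik, if_true]
      ring
    · simp only [hik, if_false] at hu ⊢
      rw [hu, hcdef]
      simp only [hik, if_false]
      have hsplit : ∫ τ in Ioi t0, h i τ = (∫ τ in Ioc t0 t, h i τ) + ∫ τ in Ioi t, h i τ := by
        rw [← setIntegral_union Ioc_disjoint_Ioi_same measurableSet_Ioi
          ((hhc i).intervalIntegrable t0 t).1 (hhint t ht i hik), Ioc_union_Ioi_eq_Ioi ht]
      rw [intervalIntegral.integral_of_le ht, hsplit]
      ring
  -- main derivative claim
  have deriv : ∀ t, t0 ≤ t → HasDerivWithinAt u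
      ((Matrix.diagonal fun i => lam i t) *ᵥ u t + G (u t) t) (Ici t0) t := by
    intro t ht
    rw [hasDerivWithinAt_pi]
    intro i
    have hW : HasDerivAt (fun s => ∫ τ in t0..s, h i τ) (h i t) t :=
      intervalIntegral.integral_hasDerivAt_right ((hhc i).intervalIntegrable _ _)
        ((hhc i).stronglyMeasurableAtFilter _ _) (hhc i).continuousAt
    have hE : HasDerivAt (fun s => Real.exp (L i s)) (Real.exp (L i t) * lam i t) t :=
      (hLder i t).exp
    have hF : HasDerivAt (fun s => Real.exp (L i s) * (c i + ∫ τ in t0..s, h i τ))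
        (Real.exp (L i t) * lam i t * (c i + ∫ τ in t0..t, h i τ)
          + Real.exp (L i t) * (0 + h i t)) t :=
      hE.mul ((hasDerivAt_const t (c i)).add hW)
    have hval : ((Matrix.diagonal fun j => lam j t) *ᵥ u t + G (u t) t) i
        = Real.exp (L i t) * lam i t * (c i + ∫ τ in t0..t, h i τ)
          + Real.exp (L i t) * (0 + h i t) := by
      have h1 : Real.exp (L i t) * h i t = g i t := by
        rw [hhdef, ← mul_assoc, ← Real.exp_add]
        simp
      have h2 : G (u t) t i = g i t := rfl
      rw [Pi.add_apply, Matrix.mulVec_diagonal, key t ht i, h2, zero_add, h1]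
      ring
    rw [hval]
    exact (hF.hasDerivWithinAt).congr (fun s hs => key s hs i) (key t ht i)
  refine ⟨fun t ht => deriv t ht, fun i hik => ?_⟩
  have h0 : (∫ τ in Ioi t0, Vu t0 τ *ᵥ G (u τ) τ) i = 0 := by
    rw [compIoi t0 le_rfl i]
    have : ∀ τ ∈ Ioi t0, (Vu t0 τ *ᵥ G (u τ) τ) i = (0 : ℝ) := by
      intro τ _
      show (Vu t0 τ *ᵥ G (u τ) τ) i = (0 : ℝ)
      rw [hVuComp t0 τ i, if_pos hik]
    rw [setIntegral_congr_fun measurableSet_Ioi this]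
    simp
  have hk0 := key t0 le_rfl i
  have hL0 : L i t0 = 0 := by rw [hLdef]; simp
  rw [intervalIntegral.integral_same, hL0, Real.exp_zero, one_mul, add_zero, hcdef] at hk0
  simp only [hik, if_true] at hk0
  rw [hk0, hpad i, dif_pos hik, Pi.neg_apply, h0]
  simp
end
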